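/- arXiv:1701.06514 — 4 statements merged into one kernel-verified Lean document; each statement's English description precedes it below -/
import Mathlib

section
/- Consider the alternating bilinear map b : O × O → Im(O) on the octonions defined by b(x₁, x₂) = x₁ x̄₂ − x₂ x̄₁, where x̄ denotes octonion conjugation and Im(O) is the space of purely imaginary octonions. If V ⊆ O is a real subspace with b(v,w) = 0 for all v,w ∈ V, then dim V ≤ 1. -/
open Quaternion

/-- The octonions, realized via the Cayley–Dickson construction as pairs of
real quaternions. -/
abbrev Octonion : Type := Quaternion ℝ × Quaternion ℝ

/-- Octonion multiplication (Cayley–Dickson):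
`(a,b)(c,d) = (ac − d̄b, da + b c̄)`. -/
noncomputable def omul (x y : Octonion) : Octonion :=
  (x.1 * y.1 - star y.2 * x.2, y.2 * x.1 + x.2 * star y.1)

/-- Octonion conjugation: `(a,b)‾ = (ā, −b)`. -/
noncomputable def oconj (x : Octonion) : Octonion :=
  (star x.1, -x.2)

/-- The alternating bilinear map `b(x₁,x₂) = x₁ x̄₂ − x₂ x̄₁`, taking values in the
purely imaginary octonions. -/
noncomputable def ob (x y : Octonion) : Octonion :=
  omul x (oconj y) - omul y (oconj x)

lemma oconj_ob (x y : Octonion) : oconj (ob x y) = -(ob x y) := by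
  simp only [ob, omul, oconj, Prod.mk.injEq, Prod.neg_mk, Prod.mk_sub_mk]
  constructor
  · simp only [star_sub, star_add, star_mul, star_star, star_neg]
    noncomm_ring
  · noncomm_ring

/-- alternative law: `v̄ (v x) = N(v) x`. -/
lemma oconj_omul_omul (v x : Octonion) :
    omul (oconj v) (omul v x) = (normSq v.1 + normSq v.2) • x := by
  have h1 : star v.1 * v.1 = ((normSq v.1 : ℝ) : ℍ[ℝ]) := star_mul_self v.1
  have h2 : star v.2 * v.2 = ((normSq v.2 : ℝ) : ℍ[ℝ]) := star_mul_self v.2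
  have h3 : v.1 * star v.1 = ((normSq v.1 : ℝ) : ℍ[ℝ]) := self_mul_star v.1
  have h4 : v.2 * star v.2 = ((normSq v.2 : ℝ) : ℍ[ℝ]) := self_mul_star v.2
  simp only [omul, oconj, Prod.smul_mk, Prod.mk.injEq, Prod.smul_def]
  constructor
  · rw [show star v.1 * (v.1 * x.1 - star x.2 * v.2) - star (x.2 * v.1 + v.2 * star x.1) * -v.2
        = (star v.1 * v.1) * x.1 + x.1 * (star v.2 * v.2) by
      simp only [star_add, star_mul, star_star]; noncomm_ring]
    rw [h1, h2, add_smul]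
    simp [coe_mul_eq_smul, mul_coe_eq_smul]
  · rw [show (x.2 * v.1 + v.2 * star x.1) * star v.1 + -v.2 * star (v.1 * x.1 - star x.2 * v.2)
        = x.2 * (v.1 * star v.1) + (v.2 * star v.2) * x.2 by
      simp only [star_sub, star_mul, star_star]; noncomm_ring]
    rw [h3, h4, add_smul]
    simp only [coe_mul_eq_smul, mul_coe_eq_smul]

lemma omul_coe (x : Octonion) (r : ℝ) : omul x (((r : ℍ[ℝ]), 0) : Octonion) = r • x := by
  simp only [omul, Prod.smul_def, Prod.mk.injEq]
  constructor
  · simp [mul_coe_eq_smul]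
  · simp [mul_coe_eq_smul, star_coe]

lemma oconj_smul (r : ℝ) (x : Octonion) : oconj (r • x) = r • oconj x := by
  simp [oconj, Prod.smul_def]

lemma eq_zero_of_eq_neg {M : Type*} [AddCommGroup M] [Module ℝ M] {a : M}
    (h : a = -a) : a = 0 := by
  have h2 : (2 : ℝ) • a = 0 := by
    rw [two_smul]; nth_rewrite 2 [h]; simp
  simpa using smul_eq_zero.mp h2

lemma key (v w : Octonion) (hv : v ≠ 0) (h : ob v w = 0) : ∃ c : ℝ, w = c • v := by
  set q : Octonion := omul v (oconj w) with hq
  have heq : omul v (oconj w) = omul w (oconj v) := sub_eq_zero.mp h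
  -- second component of q vanishes
  have h2 := congrArg Prod.snd heq
  simp only [omul, oconj, star_star] at h2
  have hq2 : q.2 = 0 := by
    have hA : (-w.2 * v.1 + v.2 * w.1) = -(-w.2 * v.1 + v.2 * w.1) := by
      nth_rewrite 1 [h2]; simp only [neg_mul]; abel
    have hA0 := eq_zero_of_eq_neg hA
    show (omul v (oconj w)).2 = 0
    simp only [omul, oconj, star_star]
    exact hA0
  -- first component of q is real
  have hq1 : q.1 = ((q.1.re : ℝ) : ℍ[ℝ]) := by
    have hq1e : q.1 = v.1 * star w.1 + star w.2 * v.2 := by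
      show (omul v (oconj w)).1 = _
      simp [omul, oconj, sub_neg_eq_add]
    have hq1e' : q.1 = w.1 * star v.1 + star v.2 * w.2 := by
      show (omul v (oconj w)).1 = _
      rw [heq]
      simp [omul, oconj, sub_neg_eq_add]
    have hstar : star q.1 = q.1 := by
      calc star q.1 = star (v.1 * star w.1 + star w.2 * v.2) := by rw [← hq1e]
        _ = w.1 * star v.1 + star v.2 * w.2 := by
            simp only [star_add, star_mul, star_star]
        _ = q.1 := hq1e'.symm
    exact Quaternion.star_eq_self.mp hstar
  have hqform : q = (((q.1.re : ℝ) : ℍ[ℝ]), 0) := Prod.ext_iff.mpr ⟨hq1, hq2⟩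
  set N : ℝ := normSq v.1 + normSq v.2 with hN
  have hNne : N ≠ 0 := by
    intro h0
    apply hv
    have h1 : normSq v.1 = 0 ∧ normSq v.2 = 0 := by
      constructor <;> nlinarith [Quaternion.normSq_nonneg (a := v.1),
        Quaternion.normSq_nonneg (a := v.2)]
    exact Prod.ext_iff.mpr ⟨Quaternion.normSq_eq_zero.mp h1.1, Quaternion.normSq_eq_zero.mp h1.2⟩
  have halt : omul (oconj v) q = N • oconj w := by
    rw [hq]; exact oconj_omul_omul v (oconj w)
  have hco : N • oconj w = q.1.re • oconj v := by
    rw [← halt, hqform, omul_coe]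
    simp
  have hw : N • w = q.1.re • v := by
    have hcc : ∀ x : Octonion, oconj (oconj x) = x := by
      intro x; simp [oconj]
    have := congrArg oconj hco
    rw [oconj_smul, oconj_smul, hcc, hcc] at this
    exact this
  refine ⟨q.1.re / N, ?_⟩
  rw [div_eq_inv_mul, mul_smul, ← hw, smul_smul, inv_mul_cancel₀ hNne, one_smul]

/-- The map `b(x₁,x₂) = x₁ x̄₂ − x₂ x̄₁` on the octonions takes values
in the purely imaginary octonions, and any real subspace `V ⊆ O` on which `b`
vanishes identically satisfies `dim V ≤ 1`. -/
theorem octonion_isotropic_dim_le_one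
    (V : Submodule ℝ Octonion)
    (hV : ∀ v ∈ V, ∀ w ∈ V, ob v w = 0) :
    (∀ x y : Octonion, oconj (ob x y) = -(ob x y)) ∧ Module.finrank ℝ V ≤ 1 := by
  refine ⟨oconj_ob, ?_⟩
  by_cases hbot : V = ⊥
  · subst hbot; simp
  · obtain ⟨v, hvV, hv0⟩ := Submodule.exists_mem_ne_zero_of_ne_bot hbot
    have hle : V ≤ ℝ ∙ v := by
      intro w hwV
      obtain ⟨c, hc⟩ := key v w hv0 (hV v hvV w hwV)
      exact Submodule.mem_span_singleton.mpr ⟨c, hc.symm⟩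
    calc Module.finrank ℝ V ≤ Module.finrank ℝ (ℝ ∙ v) := Submodule.finrank_mono hle
      _ = 1 := finrank_span_singleton hv0
end

section
/- Let X ∈ so(p,q) be an ℝ-diagonalizable (hyperbolic) element, and let V ⊂ ℝ^{p,q} be a maximally isotropic X-invariant subspace on which X acts as λ·id with λ ≠ 0 (so dim V = min(p,q) = p, say p ≤ q). Then there exists a maximally isotropic subspace V' such that V ⊕ V' is nondegenerate of signature (p,p), X acts as −λ·id on V', and X vanishes on the orthogonal complement (V ⊕ V')^⊥. -/
/-- The standard symmetric bilinear form of signature `(p,q)` on `ℝ^{p+q}`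
(first `p` coordinates negative). -/
def pform (p q : ℕ) (x y : Fin (p + q) → ℝ) : ℝ :=
  ∑ i : Fin (p + q), (if i.val < p then (-1 : ℝ) else 1) * x i * y i

/-!
Skewness of `X` makes eigenvectors with eigenvalues `a`, `b` orthogonal unless `a + b = 0`.
So an eigenvector outside `V` whose eigenvalue is neither `0` nor `-λ` would enlarge `V` to a
totally isotropic subspace of dimension `p + 1`, impossible in signature `(p, q)`. Since `X` is
diagonalizable, the whole space is `V + E(-λ) + ker X`, where `E(-λ)` is the `-λ`-eigenspace,
and `ker X` is orthogonal to `V + E(-λ)`. Hence `V' := E(-λ)` works: `V + V'` is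
nondegenerate, its orthogonal complement lies in `ker X`, and the nondegenerate pairing between
the isotropic subspaces `V` and `V'` forces `dim V' = dim V = p`.
-/

open Module Module.End Submodule

section Form

variable {p q : ℕ}

lemma pform_comm (x y : Fin (p + q) → ℝ) : pform p q x y = pform p q y x :=
  Finset.sum_congr rfl fun _ _ => by ring

def pB (p q : ℕ) : LinearMap.BilinForm ℝ (Fin (p + q) → ℝ) :=
  LinearMap.mk₂ ℝ (pform p q)
    (fun x y z => by simp only [pform, Pi.add_apply, ← Finset.sum_add_distrib]; congr! 1; ring)
    (fun c x z => by simp only [pform, Pi.smul_apply, smul_eq_mul, Finset.mul_sum]; congr! 1; ring)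
    (fun x y z => by simp only [pform, Pi.add_apply, ← Finset.sum_add_distrib]; congr! 1; ring)
    (fun c x z => by simp only [pform, Pi.smul_apply, smul_eq_mul, Finset.mul_sum]; congr! 1; ring)

lemma pform_add_left (x y z : Fin (p + q) → ℝ) :
    pform p q (x + y) z = pform p q x z + pform p q y z :=
  LinearMap.map_add₂ (pB p q) x y z

lemma pform_add_right (x y z : Fin (p + q) → ℝ) :
    pform p q x (y + z) = pform p q x y + pform p q x z :=
  map_add (pB p q x) y z

lemma pform_smul_left (c : ℝ) (x y : Fin (p + q) → ℝ) :
    pform p q (c • x) y = c * pform p q x y :=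
  LinearMap.map_smul₂ (pB p q) c x y

lemma pform_smul_right (c : ℝ) (x y : Fin (p + q) → ℝ) :
    pform p q x (c • y) = c * pform p q x y :=
  map_smul (pB p q x) c y

lemma eq_zero_of_forall_pform_eq_zero {x : Fin (p + q) → ℝ} (h : ∀ y, pform p q x y = 0) :
    x = 0 := by
  funext i
  have hi := h (Pi.single i 1)
  rw [pform, Finset.sum_eq_single i (fun j _ hj => by simp [hj]) (by simp)] at hi
  split_ifs at hi <;> simpa using hi

def IsTotallyIsotropic (p q : ℕ) (W : Submodule ℝ (Fin (p + q) → ℝ)) : Prop :=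
  ∀ v ∈ W, ∀ w ∈ W, pform p q v w = 0

def IsNondegenerateOn (p q : ℕ) (W : Submodule ℝ (Fin (p + q) → ℝ)) : Prop :=
  ∀ v ∈ W, (∀ w ∈ W, pform p q v w = 0) → v = 0

variable {W W₁ W₂ N : Submodule ℝ (Fin (p + q) → ℝ)}

lemma IsTotallyIsotropic.mono (hW : IsTotallyIsotropic p q W) (h : W₁ ≤ W) :
    IsTotallyIsotropic p q W₁ :=
  fun v hv w hw => hW v (h hv) w (h hw)

lemma IsTotallyIsotropic.sup (h₁ : IsTotallyIsotropic p q W₁) (h₂ : IsTotallyIsotropic p q W₂)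
    (h₁₂ : ∀ v ∈ W₁, ∀ w ∈ W₂, pform p q v w = 0) : IsTotallyIsotropic p q (W₁ ⊔ W₂) := by
  intro v hv w hw
  obtain ⟨v₁, hv₁, v₂, hv₂, rfl⟩ := mem_sup.1 hv
  obtain ⟨w₁, hw₁, w₂, hw₂, rfl⟩ := mem_sup.1 hw
  simp only [pform_add_left, pform_add_right, h₁ v₁ hv₁ w₁ hw₁, h₂ v₂ hv₂ w₂ hw₂,
    h₁₂ v₁ hv₁ w₂ hw₂, pform_comm v₂, h₁₂ w₁ hw₁ v₂ hv₂, add_zero]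

-- A vector of a totally isotropic subspace whose negative coordinates vanish has
-- positive coordinates with zero sum of squares.
lemma IsTotallyIsotropic.finrank_le (hW : IsTotallyIsotropic p q W) : finrank ℝ W ≤ p := by
  let π : W →ₗ[ℝ] Fin p → ℝ := LinearMap.funLeft ℝ ℝ (Fin.castAdd q) ∘ₗ W.subtype
  have hπ : Function.Injective π := by
    rw [← LinearMap.ker_eq_bot, eq_bot_iff]
    intro w hw
    have hneg : ∀ i : Fin (p + q), i.val < p → (w : Fin (p + q) → ℝ) i = 0 :=
      fun i hi => congrFun (hw : π w = 0) ⟨i, hi⟩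
    have hsq : ∑ i, (w : Fin (p + q) → ℝ) i * (w : Fin (p + q) → ℝ) i = 0 := by
      rw [← hW w w.2 w w.2, pform]
      refine Finset.sum_congr rfl fun i _ => ?_
      split_ifs with hi <;> simp [hneg i, hi]
    have hsq' := (Finset.sum_eq_zero_iff_of_nonneg fun i _ => mul_self_nonneg _).1 hsq
    exact (mem_bot ℝ).2 (Subtype.ext (funext fun i => mul_self_eq_zero.1 (hsq' i (by simp))))
  simpa using LinearMap.finrank_le_finrank_of_injective hπ

lemma isNondegenerateOn_of_top_le_sup (htop : ⊤ ≤ W ⊔ N)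
    (horth : ∀ w ∈ W, ∀ n ∈ N, pform p q w n = 0) : IsNondegenerateOn p q W := by
  intro v hv hvW
  have hker : W ⊔ N ≤ LinearMap.ker (pB p q v) :=
    sup_le (fun w hw => LinearMap.mem_ker.2 (hvW w hw))
      (fun n hn => LinearMap.mem_ker.2 (horth v hv n hn))
  exact eq_zero_of_forall_pform_eq_zero fun y => LinearMap.mem_ker.1 (hker (htop mem_top))

lemma mem_of_forall_pform_eq_zero (htop : ⊤ ≤ W ⊔ N)
    (horth : ∀ w ∈ W, ∀ n ∈ N, pform p q w n = 0) {x : Fin (p + q) → ℝ}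
    (hx : ∀ w ∈ W, pform p q x w = 0) : x ∈ N := by
  obtain ⟨w, hw, n, hn, rfl⟩ := mem_sup.1 (htop (mem_top (x := x)))
  suffices w = 0 by simpa [this] using hn
  refine isNondegenerateOn_of_top_le_sup htop horth w hw fun u hu => ?_
  have := hx u hu
  rwa [pform_add_left, pform_comm n, horth u hu n hn, add_zero] at this

lemma IsTotallyIsotropic.finrank_le_of_isNondegenerateOn_sup (h₁ : IsTotallyIsotropic p q W₁)
    (h : IsNondegenerateOn p q (W₁ ⊔ W₂)) : finrank ℝ W₁ ≤ finrank ℝ W₂ := by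
  let φ : W₁ →ₗ[ℝ] Dual ℝ W₂ := ((pB p q).compl₂ W₂.subtype).domRestrict W₁
  have hφ : Function.Injective φ := by
    rw [← LinearMap.ker_eq_bot, eq_bot_iff]
    intro v hv
    have hvW₂ : ∀ w ∈ W₂, pform p q v w = 0 := fun w hw => LinearMap.congr_fun hv ⟨w, hw⟩
    have hker : W₁ ⊔ W₂ ≤ LinearMap.ker (pB p q v) :=
      sup_le (fun w hw => LinearMap.mem_ker.2 (h₁ v v.2 w hw))
        (fun w hw => LinearMap.mem_ker.2 (hvW₂ w hw))
    exact (mem_bot ℝ).2 (Subtype.ext (h v (mem_sup_left v.2) fun w hw => hker hw))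
  simpa [Subspace.dual_finrank_eq] using LinearMap.finrank_le_finrank_of_injective hφ

end Form

def IsSkew (p q : ℕ) (X : End ℝ (Fin (p + q) → ℝ)) : Prop :=
  ∀ x y, pform p q (X x) y + pform p q x (X y) = 0

namespace IsSkew

variable {p q : ℕ} {X : End ℝ (Fin (p + q) → ℝ)} {V : Submodule ℝ (Fin (p + q) → ℝ)}
  {a b lam μ : ℝ}

lemma pform_eq_zero_of_mem_eigenspace (hX : IsSkew p q X) (hab : a + b ≠ 0)
    {x y : Fin (p + q) → ℝ} (hx : x ∈ eigenspace X a) (hy : y ∈ eigenspace X b) :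
    pform p q x y = 0 := by
  have h := hX x y
  rw [mem_eigenspace_iff.1 hx, mem_eigenspace_iff.1 hy, pform_smul_left, pform_smul_right,
    ← add_mul] at h
  exact (mul_eq_zero.1 h).resolve_left hab

lemma isTotallyIsotropic_eigenspace (hX : IsSkew p q X) (ha : a ≠ 0) :
    IsTotallyIsotropic p q (eigenspace X a) :=
  fun _ hx _ hy => hX.pform_eq_zero_of_mem_eigenspace (by contrapose! ha; linarith) hx hy

lemma pform_sup_eigenspace_eigenspace_zero (hX : IsSkew p q X) (ha : a ≠ 0) (hb : b ≠ 0)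
    {w z : Fin (p + q) → ℝ} (hw : w ∈ eigenspace X a ⊔ eigenspace X b)
    (hz : z ∈ eigenspace X 0) : pform p q w z = 0 := by
  obtain ⟨u, hu, v, hv, rfl⟩ := mem_sup.1 hw
  rw [pform_add_left, hX.pform_eq_zero_of_mem_eigenspace (by simpa) hu hz,
    hX.pform_eq_zero_of_mem_eigenspace (by simpa) hv hz, add_zero]

lemma mem_or_eq_neg_or_eq_zero (hX : IsSkew p q X) (hV : IsTotallyIsotropic p q V)
    (hVdim : finrank ℝ V = p) (hVlam : V ≤ eigenspace X lam) {e : Fin (p + q) → ℝ}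
    (he : e ∈ eigenspace X μ) : e ∈ V ∨ μ = -lam ∨ μ = 0 := by
  by_contra! h
  obtain ⟨heV, hμlam, hμ⟩ := h
  have hspan : span ℝ {e} ≤ eigenspace X μ := span_le.2 (Set.singleton_subset_iff.2 he)
  have hiso : IsTotallyIsotropic p q (V ⊔ span ℝ {e}) :=
    hV.sup ((hX.isTotallyIsotropic_eigenspace hμ).mono hspan) fun v hv w hw =>
      hX.pform_eq_zero_of_mem_eigenspace (by contrapose! hμlam; linarith) (hVlam hv) (hspan hw)
  have := hiso.finrank_le
  rw [finrank_sup_span_singleton heV] at this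
  omega

lemma top_le_sup_eigenspace (hX : IsSkew p q X) (hV : IsTotallyIsotropic p q V)
    (hVdim : finrank ℝ V = p) (hVlam : V ≤ eigenspace X lam) {ι : Type*}
    (bb : Basis ι ℝ (Fin (p + q) → ℝ)) (μ : ι → ℝ) (hbb : ∀ i, X (bb i) = μ i • bb i) :
    ⊤ ≤ V ⊔ eigenspace X (-lam) ⊔ eigenspace X 0 := by
  rw [← bb.span_eq, span_le]
  rintro _ ⟨i, rfl⟩
  have hi : bb i ∈ eigenspace X (μ i) := mem_eigenspace_iff.2 (hbb i)
  rcases hX.mem_or_eq_neg_or_eq_zero hV hVdim hVlam hi with h | h | h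
  · exact mem_sup_left (mem_sup_left h)
  · exact mem_sup_left (mem_sup_right (h ▸ hi))
  · exact mem_sup_right (h ▸ hi)

end IsSkew

theorem hyperbolic_isometric_element_general
    (p q : ℕ)
    (X : (Fin (p + q) → ℝ) →ₗ[ℝ] (Fin (p + q) → ℝ))
    (hskew : ∀ x y, pform p q (X x) y + pform p q x (X y) = 0)
    (hdiag : ∃ (bb : Module.Basis (Fin (p + q)) ℝ (Fin (p + q) → ℝ)) (μ : Fin (p + q) → ℝ),
      ∀ i, X (bb i) = μ i • bb i)
    (lam : ℝ) (hlam : lam ≠ 0)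
    (V : Submodule ℝ (Fin (p + q) → ℝ))
    (hViso : ∀ v ∈ V, ∀ w ∈ V, pform p q v w = 0)
    (hVdim : Module.finrank ℝ V = p)
    (hXV : ∀ v ∈ V, X v = lam • v) :
    ∃ V' : Submodule ℝ (Fin (p + q) → ℝ),
      (∀ v ∈ V', ∀ w ∈ V', pform p q v w = 0) ∧
      Module.finrank ℝ V' = p ∧
      (∀ v ∈ V', X v = (-lam) • v) ∧
      V ⊓ V' = ⊥ ∧
      Module.finrank ℝ (V ⊔ V' : Submodule ℝ (Fin (p + q) → ℝ)) = 2 * p ∧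
      (∀ v ∈ V ⊔ V', (∀ w ∈ V ⊔ V', pform p q v w = 0) → v = 0) ∧
      (∀ w : Fin (p + q) → ℝ, (∀ u ∈ V ⊔ V', pform p q w u = 0) → X w = 0) := by
  obtain ⟨bb, μ, hbb⟩ := hdiag
  have hX : IsSkew p q X := hskew
  have hV : IsTotallyIsotropic p q V := hViso
  have hVlam : V ≤ eigenspace X lam := fun v hv => mem_eigenspace_iff.2 (hXV v hv)
  set V' := eigenspace X (-lam)
  have hV' : IsTotallyIsotropic p q V' := hX.isTotallyIsotropic_eigenspace (neg_ne_zero.2 hlam)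
  have htop : ⊤ ≤ (V ⊔ V') ⊔ eigenspace X 0 := hX.top_le_sup_eigenspace hV hVdim hVlam bb μ hbb
  have horth : ∀ w ∈ V ⊔ V', ∀ z ∈ eigenspace X 0, pform p q w z = 0 := fun w hw z hz =>
    hX.pform_sup_eigenspace_eigenspace_zero hlam (neg_ne_zero.2 hlam)
      (sup_le_sup_right hVlam _ hw) hz
  have hnd : IsNondegenerateOn p q (V ⊔ V') := isNondegenerateOn_of_top_le_sup htop horth
  have hinf : V ⊓ V' = ⊥ :=
    ((disjoint_genEigenspace X (by contrapose! hlam; linarith) 1 1).mono_left hVlam).eq_bot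
  have hV'dim : finrank ℝ V' = p := (le_antisymm
    (hV'.finrank_le_of_isNondegenerateOn_sup (sup_comm V V' ▸ hnd))
    (hV.finrank_le_of_isNondegenerateOn_sup hnd)).trans hVdim
  refine ⟨V', hV', hV'dim, fun v hv => mem_eigenspace_iff.1 hv, hinf, ?_, hnd, fun w hw => ?_⟩
  · have := finrank_sup_add_finrank_inf_eq V V'
    rw [hinf, finrank_bot, hVdim, hV'dim] at this
    omega
  · simpa using mem_of_forall_pform_eq_zero htop horth hw

/-- Let `X ∈ so(p,q)` (`p ≤ q`) be an ℝ-diagonalizable element and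
`V ⊂ ℝ^{p,q}` a maximally isotropic (`dim V = p`) `X`-invariant subspace on which `X`
acts as `λ·id`, `λ ≠ 0`. Then there is a maximally isotropic subspace `V'` on which `X`
acts as `−λ·id`, such that `V ⊕ V'` is nondegenerate of signature `(p,p)` and `X`
vanishes on `(V ⊕ V')^⊥`. -/
theorem hyperbolic_isometric_element
    (p q : ℕ) (hpq : p ≤ q)
    (X : (Fin (p + q) → ℝ) →ₗ[ℝ] (Fin (p + q) → ℝ))
    (hskew : ∀ x y, pform p q (X x) y + pform p q x (X y) = 0)
    (hdiag : ∃ (bb : Module.Basis (Fin (p + q)) ℝ (Fin (p + q) → ℝ)) (μ : Fin (p + q) → ℝ),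
      ∀ i, X (bb i) = μ i • bb i)
    (lam : ℝ) (hlam : lam ≠ 0)
    (V : Submodule ℝ (Fin (p + q) → ℝ))
    (hViso : ∀ v ∈ V, ∀ w ∈ V, pform p q v w = 0)
    (hVdim : Module.finrank ℝ V = p)
    (hXV : ∀ v ∈ V, X v = lam • v) :
    ∃ V' : Submodule ℝ (Fin (p + q) → ℝ),
      (∀ v ∈ V', ∀ w ∈ V', pform p q v w = 0) ∧
      Module.finrank ℝ V' = p ∧
      (∀ v ∈ V', X v = (-lam) • v) ∧
      V ⊓ V' = ⊥ ∧
      Module.finrank ℝ (V ⊔ V' : Submodule ℝ (Fin (p + q) → ℝ)) = 2 * p ∧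
      (∀ v ∈ V ⊔ V', (∀ w ∈ V ⊔ V', pform p q v w = 0) → v = 0) ∧
      (∀ w : Fin (p + q) → ℝ, (∀ u ∈ V ⊔ V', pform p q w u = 0) → X w = 0) :=
  hyperbolic_isometric_element_general p q X hskew hdiag lam hlam V hViso hVdim hXV
end

section
/- Let V = ℝ^{p,q} be a pseudo-Euclidean space and T : V × V × V → V a trilinear map with the symmetries of a (3,1)-curvature tensor: T(u,v,w) = −T(v,u,w), T(u,v,w) + T(v,w,u) + T(w,u,v) = 0, and ⟨T(u,v,w), z⟩ = −⟨T(u,v,z), w⟩. Let V₁, V₂ ⊆ V be subspaces such that V₁ ∩ V₂ is nondegenerate and V = V₁ + V₂. If T(Vᵢ,Vᵢ,Vᵢ) = 0 for i = 1,2 and the image of T is contained in V₁ ∩ V₂, then T = 0. -/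
/-- Let `V` be a pseudo-Euclidean space and `T` a trilinear map with the
symmetries of a `(3,1)`-curvature tensor. If `V₁, V₂ ⊆ V` satisfy that `V₁ ∩ V₂` is
nondegenerate, `V = V₁ + V₂`, `T` vanishes on `Vᵢ × Vᵢ × Vᵢ` for `i = 1,2`, and the
image of `T` is contained in `V₁ ∩ V₂`, then `T = 0`. -/
theorem curvature_tensor_vanishes
    {V : Type*} [AddCommGroup V] [Module ℝ V] [FiniteDimensional ℝ V]
    (B : LinearMap.BilinForm ℝ V)
    (hsym : ∀ x y, B x y = B y x)
    (hnd : B.Nondegenerate)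
    (T : V →ₗ[ℝ] V →ₗ[ℝ] V →ₗ[ℝ] V)
    (hanti : ∀ u v w, T u v w = -T v u w)
    (hbianchi : ∀ u v w, T u v w + T v w u + T w u v = 0)
    (hpair : ∀ u v w z, B (T u v w) z = -B (T u v z) w)
    (V₁ V₂ : Submodule ℝ V)
    (hint_nd : ∀ v ∈ V₁ ⊓ V₂, (∀ w ∈ V₁ ⊓ V₂, B v w = 0) → v = 0)
    (hsum : V₁ ⊔ V₂ = ⊤)
    (hT1 : ∀ u ∈ V₁, ∀ v ∈ V₁, ∀ w ∈ V₁, T u v w = 0)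
    (hT2 : ∀ u ∈ V₂, ∀ v ∈ V₂, ∀ w ∈ V₂, T u v w = 0)
    (him : ∀ u v w : V, T u v w ∈ V₁ ⊓ V₂) :
    T = 0 := by
  have hA : ∀ u v w z : V, B (T u v w) z = -B (T v u w) z := by
    intro u v w z
    rw [hanti u v w]
    simp
  have hb : ∀ a b c d : V, B (T a b c) d + B (T b c a) d + B (T c a b) d = 0 := by
    intro a b c d
    have h1 := hbianchi a b c
    have h2 : B (T a b c + T b c a + T c a b) d = B (0 : V) d := by rw [h1]
    simpa [map_add] using h2
  -- pair symmetry: B(T u v w, z) = B(T w z u, v)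
  have hps : ∀ u v w z : V, B (T u v w) z = B (T w z u) v := by
    intro u v w z
    linarith [hb v w u z, hb w u z v, hb u z v w, hb z v w u,
      hpair v w u z, hpair w u v z, hpair u z v w, hpair z v w u,
      hA v u z w, hpair u v z w, hA w z v u, hpair z w v u, hA z w u v]
  -- key case analysis
  have key : ∀ a b c : V, (a ∈ V₁ ∨ a ∈ V₂) → (b ∈ V₁ ∨ b ∈ V₂) → (c ∈ V₁ ∨ c ∈ V₂) →
      ∀ z ∈ V₁ ⊓ V₂, B (T a b c) z = 0 := by
    intro a b c ha hb' hc z hz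
    obtain ⟨hz1, hz2⟩ := hz
    rcases ha with ha | ha <;> rcases hb' with hb' | hb' <;> rcases hc with hc | hc
    · rw [hT1 a ha b hb' c hc]; simp
    · rw [hpair, hT1 a ha b hb' z hz1]; simp
    · rw [hps, hT1 c hc z hz1 a ha]; simp
    · rw [hA, hps b a c z, hT2 c hc z hz2 b hb']; simp
    · rw [hA, hps b a c z, hT1 c hc z hz1 b hb']; simp
    · rw [hps, hT2 c hc z hz2 a ha]; simp
    · rw [hpair, hT2 a ha b hb' z hz2]; simp
    · rw [hT2 a ha b hb' c hc]; simp
  have main : ∀ u v w z : V, z ∈ V₁ ⊓ V₂ → B (T u v w) z = 0 := by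
    intro u v w z hz
    have hu : u ∈ V₁ ⊔ V₂ := by rw [hsum]; trivial
    have hv : v ∈ V₁ ⊔ V₂ := by rw [hsum]; trivial
    have hw : w ∈ V₁ ⊔ V₂ := by rw [hsum]; trivial
    obtain ⟨u1, hu1, u2, hu2, rfl⟩ := Submodule.mem_sup.mp hu
    obtain ⟨v1, hv1, v2, hv2, rfl⟩ := Submodule.mem_sup.mp hv
    obtain ⟨w1, hw1, w2, hw2, rfl⟩ := Submodule.mem_sup.mp hw
    simp only [map_add, LinearMap.add_apply]
    linarith [key u1 v1 w1 (Or.inl hu1) (Or.inl hv1) (Or.inl hw1) z hz,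
      key u1 v1 w2 (Or.inl hu1) (Or.inl hv1) (Or.inr hw2) z hz,
      key u1 v2 w1 (Or.inl hu1) (Or.inr hv2) (Or.inl hw1) z hz,
      key u1 v2 w2 (Or.inl hu1) (Or.inr hv2) (Or.inr hw2) z hz,
      key u2 v1 w1 (Or.inr hu2) (Or.inl hv1) (Or.inl hw1) z hz,
      key u2 v1 w2 (Or.inr hu2) (Or.inl hv1) (Or.inr hw2) z hz,
      key u2 v2 w1 (Or.inr hu2) (Or.inr hv2) (Or.inl hw1) z hz,
      key u2 v2 w2 (Or.inr hu2) (Or.inr hv2) (Or.inr hw2) z hz]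
  ext u v w
  have : T u v w = 0 := hint_nd (T u v w) (him u v w) (fun z hz => main u v w z hz)
  simpa using this
end

section
/- Let g be a real semisimple Lie algebra of real rank 1 with restricted roots {±α, ±2α}, θ a Cartan involution, a the Cartan subspace, and s = a ⊕ g_α ⊕ g_{2α}. Let h ⊆ g be a Lie subalgebra invariant under ad(s) with h ∩ g_{−2α} = 0. If h ∩ g_{−α} ≠ 0, then a ⊆ h and g_α ⊕ g_{2α} ⊆ h. -/
/-- Let `g` be a real semisimple Lie algebra of real rank 1 with
restricted roots `{±α, ±2α}` (normalized so `α(Hα) = 1` for the coroot `Hα` spanning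
`a`), `θ` a Cartan involution, and `s = a ⊕ g_α ⊕ g_{2α}`. If `h ⊆ g` is an
`ad(s)`-invariant Lie subalgebra with `h ∩ g₋₂α = 0` and `h ∩ g₋α ≠ 0`, then
`a ⊆ h` and `g_α ⊕ g_{2α} ⊆ h`. -/
theorem rank_one_subalgebra_contains_s
    {L : Type*} [LieRing L] [LieAlgebra ℝ L]
    (θ : L →ₗ⁅ℝ⁆ L) (hθinv : ∀ x : L, θ (θ x) = x)
    (Hα : L)
    (gα g2α gnα gn2α : Submodule ℝ L)
    (hwα : ∀ X ∈ gα, ⁅Hα, X⁆ = X)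
    (hw2α : ∀ X ∈ g2α, ⁅Hα, X⁆ = (2 : ℝ) • X)
    (hwnα : ∀ X ∈ gnα, ⁅Hα, X⁆ = -X)
    (hwn2α : ∀ X ∈ gn2α, ⁅Hα, X⁆ = (-2 : ℝ) • X)
    (hθroot : ∀ X ∈ gnα, θ X ∈ gα)
    (hkey : ∀ X ∈ gnα, ∃ c : ℝ, ⁅X, θ X⁆ = c • Hα ∧ (X ≠ 0 → c ≠ 0))
    (h : LieSubalgebra ℝ L)
    (hinvH : ∀ Z ∈ h, ⁅Hα, Z⁆ ∈ h)
    (hinvα : ∀ E ∈ gα, ∀ Z ∈ h, ⁅E, Z⁆ ∈ h)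
    (hinv2α : ∀ E ∈ g2α, ∀ Z ∈ h, ⁅E, Z⁆ ∈ h)
    (hdisj : ∀ X : L, X ∈ h → X ∈ gn2α → X = 0)
    (hne : ∃ X : L, X ∈ h ∧ X ∈ gnα ∧ X ≠ 0) :
    Hα ∈ h ∧ (∀ X ∈ gα, X ∈ h) ∧ (∀ X ∈ g2α, X ∈ h) := by
  obtain ⟨X, hXh, hXn, hX0⟩ := hne
  obtain ⟨c, hc, hc0⟩ := hkey X hXn
  have hc0' := hc0 hX0
  have h1 : ⁅θ X, X⁆ ∈ h := hinvα _ (hθroot X hXn) _ hXh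
  have h2 : ⁅θ X, X⁆ = -(c • Hα) := by rw [← hc, ← lie_skew]
  have h3 : c • Hα ∈ h := by
    have := h.neg_mem h1
    rwa [h2, neg_neg] at this
  have hH : Hα ∈ h := by
    have := h.smul_mem c⁻¹ h3
    rwa [smul_smul, inv_mul_cancel₀ hc0', one_smul] at this
  refine ⟨hH, ?_, ?_⟩
  · intro E hE
    have := hinvα E hE _ hH
    have hb : ⁅E, Hα⁆ = -E := by rw [← lie_skew, hwα E hE]
    rw [hb] at this
    simpa using h.neg_mem this
  · intro E hE
    have := hinv2α E hE _ hH
    have hb : ⁅E, Hα⁆ = (-2 : ℝ) • E := by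
      rw [← lie_skew, hw2α E hE]; module
    rw [hb] at this
    have := h.smul_mem (-2 : ℝ)⁻¹ this
    rwa [smul_smul, inv_mul_cancel₀ (by norm_num), one_smul] at this
end
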